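/- arXiv:1106.0875 — 4 statements merged into one kernel-verified Lean document; each statement's English description precedes it below -/
import Mathlib

section
/- Define δ_i := (1−s)·∂_i x_{i+1}. Then the mixed braid-type relations hold: δ_i s_{i+1} s_i = s_{i+1} s_i δ_{i+1}, δ_{i+1} s_i s_{i+1} = s_i s_{i+1} δ_i, and s_i δ_{i+1} s_i = s_{i+1} δ_i s_{i+1}, as operator identities on ℚ(s)[x_1,…,x_N]. -/
noncomputable section

open MvPolynomial

/-- The field of rational functions in `N` variables over `K`,
realized as the fraction field of the polynomial ring. -/
abbrev FF (K : Type*) [Field K] (N : ℕ) : Type _ :=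
  FractionRing (MvPolynomial (Fin N) K)

/-- The variable `x_i` viewed inside the rational function field. -/
def xv (K : Type*) [Field K] {N : ℕ} (i : Fin N) : FF K N :=
  algebraMap (MvPolynomial (Fin N) K) (FF K N) (MvPolynomial.X i)

/-- Constants of `K` viewed inside the rational function field. -/
def cc (K : Type*) [Field K] {N : ℕ} (a : K) : FF K N :=
  algebraMap (MvPolynomial (Fin N) K) (FF K N) (MvPolynomial.C a)

/-- The automorphism of the rational function field swapping the variables `x_i` and `x_j`. -/
def sw {K : Type*} [Field K] {N : ℕ} (i j : Fin N) (f : FF K N) : FF K N :=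
  (IsFractionRing.ringEquivOfRingEquiv
    (K := FF K N) (L := FF K N)
    (MvPolynomial.renameEquiv K (Equiv.swap i j)).toRingEquiv) f

/-- The divided difference `∂` associated to the pair of variables `x_i, x_j`:
`∂ f = (f - f∘s_{ij})/(x_i - x_j)`. -/
def dd {K : Type*} [Field K] {N : ℕ} (i j : Fin N) (f : FF K N) : FF K N :=
  (f - sw i j f) / (xv K i - xv K j)

/-- The Demazure–Lusztig (Hecke) operator `T_i = ∂_i x_{i+1} (1-s) + s s_i`
(operators written as acting on the right, so the composite `∂_i x_{i+1}` sends
`f` to `x_{i+1} · ∂_i f`), here for the pair of variables `x_i, x_j`. -/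
def TT {K : Type*} [Field K] {N : ℕ} (s : K) (i j : Fin N) (f : FF K N) : FF K N :=
  (1 - cc K s) * (xv K j * dd i j f) + cc K s * sw i j f

/-- The operator `δ_i = ∂_i x_{i+1} (1-s)`. -/
def deltaOp {K : Type*} [Field K] {N : ℕ} (s : K) (i j : Fin N) (f : FF K N) : FF K N :=
  (1 - cc K s) * (xv K j * dd i j f)

def swE {K : Type*} [Field K] {N : ℕ} (σ : Equiv.Perm (Fin N)) : FF K N ≃+* FF K N :=
  IsFractionRing.ringEquivOfRingEquiv (MvPolynomial.renameEquiv K σ).toRingEquiv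

lemma sw_eq_swE {K : Type*} [Field K] {N : ℕ} (i j : Fin N) (f : FF K N) :
    sw i j f = swE (Equiv.swap i j) f := rfl

lemma swE_algebraMap {K : Type*} [Field K] {N : ℕ} (σ : Equiv.Perm (Fin N))
    (p : MvPolynomial (Fin N) K) :
    swE σ (algebraMap (MvPolynomial (Fin N) K) (FF K N) p)
      = algebraMap (MvPolynomial (Fin N) K) (FF K N) (MvPolynomial.rename σ p) :=
  IsFractionRing.ringEquivOfRingEquiv_algebraMap _ _

lemma swE_xv {K : Type*} [Field K] {N : ℕ} (σ : Equiv.Perm (Fin N)) (k : Fin N) :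
    swE σ (xv K k) = xv K (σ k) := by
  simp [xv, swE_algebraMap]

lemma swE_cc {K : Type*} [Field K] {N : ℕ} (σ : Equiv.Perm (Fin N)) (a : K) :
    swE (N := N) σ (cc K a) = cc K a := by
  simp [cc, swE_algebraMap]

lemma swE_comp {K : Type*} [Field K] {N : ℕ} (σ τ : Equiv.Perm (Fin N)) (f : FF K N) :
    swE σ (swE τ f) = swE (τ.trans σ) f := by
  have h : ((swE (K := K) σ : FF K N ≃+* FF K N) :
      FF K N →+* FF K N).comp (swE τ : FF K N ≃+* FF K N)
      = ((swE (τ.trans σ) : FF K N ≃+* FF K N) : FF K N →+* FF K N) := by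
    apply IsLocalization.ringHom_ext (nonZeroDivisors (MvPolynomial (Fin N) K))
    ext p <;>
      simp [RingHom.coe_comp, Function.comp_apply, RingHom.coe_coe, swE_algebraMap]
  exact RingHom.congr_fun h f

lemma swE_refl {K : Type*} [Field K] {N : ℕ} (f : FF K N) :
    swE (Equiv.refl (Fin N)) f = f := by
  have h : ((swE (Equiv.refl (Fin N)) : FF K N ≃+* FF K N) : FF K N →+* FF K N)
      = RingHom.id (FF K N) := by
    apply IsLocalization.ringHom_ext (nonZeroDivisors (MvPolynomial (Fin N) K))
    ext p <;>
      simp [RingHom.coe_comp, Function.comp_apply, RingHom.coe_coe, swE_algebraMap]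
  exact RingHom.congr_fun h f

lemma swE_sw {K : Type*} [Field K] {N : ℕ} (σ : Equiv.Perm (Fin N)) (j k : Fin N)
    (f : FF K N) : swE σ (sw j k f) = sw (σ j) (σ k) (swE σ f) := by
  have hperm : (Equiv.swap j k).trans σ = σ.trans (Equiv.swap (σ j) (σ k)) := by
    ext x
    simp [Equiv.swap_apply_def, EmbeddingLike.apply_eq_iff_eq, apply_ite σ]
  rw [sw_eq_swE, sw_eq_swE, swE_comp, swE_comp, hperm]

set_option synthInstance.maxHeartbeats 400000 in
lemma swE_delta {K : Type*} [Field K] {N : ℕ} (s : K) (σ : Equiv.Perm (Fin N))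
    (j k : Fin N) (f : FF K N) :
    swE σ (deltaOp s j k f) = deltaOp s (σ j) (σ k) (swE σ f) := by
  unfold deltaOp dd
  simp only [map_mul, map_sub, map_one, map_div₀, swE_cc, swE_xv, swE_sw]

/-- with `δ_j := (1−s)·∂_j x_{j+1}`, the mixed braid-type relations
`δ_i s_{i+1} s_i = s_{i+1} s_i δ_{i+1}`, `δ_{i+1} s_i s_{i+1} = s_i s_{i+1} δ_i`
and `s_i δ_{i+1} s_i = s_{i+1} δ_i s_{i+1}` hold (operators acting on the right,
composed left to right). -/
theorem delta_mixed_braid {K : Type*} [Field K] {N : ℕ} (s : K)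
    (i : ℕ) (h2 : i + 2 < N) :
    (∀ f : FF K N,
      sw (⟨i, by omega⟩ : Fin N) ⟨i + 1, by omega⟩
        (sw (⟨i + 1, by omega⟩ : Fin N) ⟨i + 2, h2⟩
          (deltaOp s (⟨i, by omega⟩ : Fin N) ⟨i + 1, by omega⟩ f))
      = deltaOp s (⟨i + 1, by omega⟩ : Fin N) ⟨i + 2, h2⟩
          (sw (⟨i, by omega⟩ : Fin N) ⟨i + 1, by omega⟩
            (sw (⟨i + 1, by omega⟩ : Fin N) ⟨i + 2, h2⟩ f))) ∧
    (∀ f : FF K N,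
      sw (⟨i + 1, by omega⟩ : Fin N) ⟨i + 2, h2⟩
        (sw (⟨i, by omega⟩ : Fin N) ⟨i + 1, by omega⟩
          (deltaOp s (⟨i + 1, by omega⟩ : Fin N) ⟨i + 2, h2⟩ f))
      = deltaOp s (⟨i, by omega⟩ : Fin N) ⟨i + 1, by omega⟩
          (sw (⟨i + 1, by omega⟩ : Fin N) ⟨i + 2, h2⟩
            (sw (⟨i, by omega⟩ : Fin N) ⟨i + 1, by omega⟩ f))) ∧
    (∀ f : FF K N,
      sw (⟨i, by omega⟩ : Fin N) ⟨i + 1, by omega⟩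
        (deltaOp s (⟨i + 1, by omega⟩ : Fin N) ⟨i + 2, h2⟩
          (sw (⟨i, by omega⟩ : Fin N) ⟨i + 1, by omega⟩ f))
      = sw (⟨i + 1, by omega⟩ : Fin N) ⟨i + 2, h2⟩
          (deltaOp s (⟨i, by omega⟩ : Fin N) ⟨i + 1, by omega⟩
            (sw (⟨i + 1, by omega⟩ : Fin N) ⟨i + 2, h2⟩ f))) := by
  set a : Fin N := ⟨i, by omega⟩ with ha
  set b : Fin N := ⟨i + 1, by omega⟩ with hb
  set c : Fin N := ⟨i + 2, h2⟩ with hc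
  have hab : a ≠ b := by simp only [ha, hb, ne_eq, Fin.mk.injEq]; omega
  have hac : a ≠ c := by simp only [ha, hc, ne_eq, Fin.mk.injEq]; omega
  have hbc : b ≠ c := by simp only [hb, hc, ne_eq, Fin.mk.injEq]; omega
  have e1 : Equiv.swap b c a = a := Equiv.swap_apply_of_ne_of_ne hab hac
  have e2 : Equiv.swap a b c = c := Equiv.swap_apply_of_ne_of_ne hac.symm hbc.symm
  refine ⟨fun f => ?_, fun f => ?_, fun f => ?_⟩
  · rw [sw_eq_swE b c, swE_delta, sw_eq_swE a b, swE_delta,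
      e1, Equiv.swap_apply_left, Equiv.swap_apply_left, e2,
      sw_eq_swE a b, sw_eq_swE b c]
  · rw [sw_eq_swE a b, swE_delta, sw_eq_swE b c, swE_delta,
      Equiv.swap_apply_right, e2, Equiv.swap_apply_right, e1,
      sw_eq_swE b c, sw_eq_swE a b]
  · rw [sw_eq_swE a b f, sw_eq_swE a b (deltaOp s b c _), swE_delta,
      Equiv.swap_apply_right, e2,
      sw_eq_swE b c f, sw_eq_swE b c (deltaOp s a b _), swE_delta,
      e1, Equiv.swap_apply_left, swE_comp, swE_comp, Equiv.swap_swap, Equiv.swap_swap,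
      swE_refl]
end
end

section
/- In the Hecke algebra H_N(s) with S = T_1⋯T_{N−1}, the element S^N is central: T_j S^N = S^N T_j for all 1 ≤ j ≤ N−1. -/
/-! Write `S_k = T_k ⋯ T_n` with `n = N - 1`, so `S = S_1`. The braid and far-commutation
relations give `S T_i = T_(i+1) S` for `i < n`, hence `S^m T_i = T_(i+m) S^m`; a downward
induction on `k` using `S_(k+1) S_k = T_(k+1) T_k S_(k+2) S_(k+1)` gives
`S_(k+1) S_k T_n = T_k S_(k+1) S_k`, so `S^2 T_n = T_1 S^2`. Splitting
`S^N = S^(j-1) S^2 S^(n-j)`, the generator `T_j` travels through it as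
`T_j ↦ T_1 ↦ T_n ↦ T_j`. -/

section AscProd

variable {M : Type*} [Monoid M] (T : ℕ → M) (n : ℕ)

/-- `T k * T (k + 1) * ⋯ * T n`, the empty product `1` when `n < k`. -/
def ascProd (k : ℕ) : M := ((List.range' k (n + 1 - k)).map T).prod

theorem ascProd_of_lt {k : ℕ} (h : n < k) : ascProd T n k = 1 := by
  simp [ascProd, Nat.sub_eq_zero_of_le h]

theorem ascProd_eq_mul {k : ℕ} (h : k ≤ n) : ascProd T n k = T k * ascProd T n (k + 1) := by
  rw [ascProd, ascProd, show n + 1 - k = n + 1 - (k + 1) + 1 by omega, List.range'_succ]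
  simp

theorem ascProd_one : ascProd T n 1 = ((List.range n).map fun k => T (k + 1)).prod := by
  rw [ascProd, Nat.add_sub_cancel, List.range'_eq_map_range, List.map_map]
  congr 2
  ext k
  simp [Nat.add_comm]

end AscProd

section BraidRelations

variable {M : Type*} [Monoid M] {T : ℕ → M} {n : ℕ}
  (hbraid : ∀ i, 1 ≤ i → i + 1 ≤ n → T i * T (i + 1) * T i = T (i + 1) * T i * T (i + 1))
  (hcomm : ∀ i j, 1 ≤ i → j ≤ n → i + 1 < j → T i * T j = T j * T i)
include hcomm

theorem commute_ascProd {i m : ℕ} (hi : 1 ≤ i) (him : i + 1 < m) :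
    Commute (T i) (ascProd T n m) :=
  Commute.list_prod_right _ _ fun x hx => by
    obtain ⟨j, hj, rfl⟩ := List.mem_map.1 hx
    rw [List.mem_range'_1] at hj
    exact hcomm i j hi (by omega) (by omega)

theorem ascProd_succ_mul_ascProd_eq {k : ℕ} (hk : 1 ≤ k) (hkn : k + 1 ≤ n) :
    ascProd T n (k + 1) * ascProd T n k
      = T (k + 1) * T k * (ascProd T n (k + 2) * ascProd T n (k + 1)) := by
  have hc := (commute_ascProd hcomm hk (by omega : k + 1 < k + 2)).eq
  rw [ascProd_eq_mul T n (k := k) (by omega), ascProd_eq_mul T n (k := k + 1) hkn]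
  simp only [mul_assoc]
  rw [← mul_assoc (ascProd T n (k + 2)) (T k), ← hc]
  simp only [mul_assoc]

include hbraid

theorem ascProd_mul_of_le {k i : ℕ} (hk : 1 ≤ k) (hki : k ≤ i) (hi : i < n) :
    ascProd T n k * T i = T (i + 1) * ascProd T n k := by
  obtain ⟨d, rfl⟩ := Nat.exists_eq_add_of_le hki
  induction d generalizing k with
  | zero =>
    rw [ascProd_eq_mul T n (by omega), ascProd_eq_mul T n (k := k + 1) (by omega), add_zero,
      mul_assoc, mul_assoc, ← (commute_ascProd hcomm hk (by omega : k + 1 < k + 2)).eq]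
    simp only [← mul_assoc, hbraid k hk (by omega)]
  | succ d ih =>
    rw [ascProd_eq_mul T n (by omega), mul_assoc, show k + (d + 1) = k + 1 + d by omega,
      ih (by omega) (by omega) (by omega), ← mul_assoc, ← mul_assoc,
      hcomm k _ hk (by omega) (by omega)]

theorem ascProd_succ_mul_ascProd_mul_last {k : ℕ} (hk : 1 ≤ k) (hkn : k ≤ n) :
    ascProd T n (k + 1) * ascProd T n k * T n = T k * (ascProd T n (k + 1) * ascProd T n k) := by
  induction hkn using Nat.decreasingInduction with
  | self => simp [ascProd_of_lt T n (Nat.lt_succ_self n), ascProd_eq_mul T n le_rfl]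
  | of_succ k hkn ih =>
    rw [ascProd_succ_mul_ascProd_eq hcomm hk hkn]
    calc T (k + 1) * T k * (ascProd T n (k + 2) * ascProd T n (k + 1)) * T n
        = T (k + 1) * T k * T (k + 1) * (ascProd T n (k + 2) * ascProd T n (k + 1)) := by
          rw [mul_assoc _ _ (T n), ih (by omega), mul_assoc (T (k + 1) * T k)]
      _ = T k * (T (k + 1) * T k * (ascProd T n (k + 2) * ascProd T n (k + 1))) := by
          rw [← hbraid k hk hkn]; simp only [mul_assoc]

theorem ascProd_one_pow_mul {m i : ℕ} (hi : 1 ≤ i) (him : i + m ≤ n) :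
    ascProd T n 1 ^ m * T i = T (i + m) * ascProd T n 1 ^ m := by
  induction m generalizing i with
  | zero => simp
  | succ m ih =>
    rw [pow_succ, mul_assoc, ascProd_mul_of_le hbraid hcomm le_rfl hi (by omega), ← mul_assoc,
      ih (by omega) (by omega), mul_assoc, add_right_comm, add_assoc]

theorem ascProd_one_sq_mul_last (hn : 1 ≤ n) :
    ascProd T n 1 ^ 2 * T n = T 1 * ascProd T n 1 ^ 2 := by
  have h1 := ascProd_eq_mul T n hn (k := 1)
  calc ascProd T n 1 ^ 2 * T n = T 1 * (ascProd T n 2 * ascProd T n 1 * T n) := by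
        rw [sq]; nth_rewrite 1 [h1]; simp only [mul_assoc]
    _ = T 1 * (T 1 * (ascProd T n 2 * ascProd T n 1)) := by
        rw [ascProd_succ_mul_ascProd_mul_last hbraid hcomm le_rfl hn]
    _ = T 1 * ascProd T n 1 ^ 2 := by
        rw [sq]; nth_rewrite 2 [h1]; simp only [mul_assoc]

theorem commute_ascProd_one_pow {j : ℕ} (hj : 1 ≤ j) (hjn : j ≤ n) :
    Commute (T j) (ascProd T n 1 ^ (n + 1)) := by
  obtain ⟨a, rfl⟩ := Nat.exists_eq_add_of_le hj
  obtain ⟨b, rfl⟩ := Nat.exists_eq_add_of_le hjn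
  have hleft := ascProd_one_pow_mul hbraid hcomm le_rfl (m := a) (by omega)
  have hright := ascProd_one_pow_mul hbraid hcomm (i := 1 + a) (m := b) (by omega) le_rfl
  have hsq := ascProd_one_sq_mul_last hbraid hcomm (by omega)
  set S := ascProd T (1 + a + b) 1
  rw [Commute, SemiconjBy, show 1 + a + b + 1 = a + 2 + b by omega, pow_add, pow_add]
  calc T (1 + a) * (S ^ a * S ^ 2 * S ^ b) = S ^ a * (T 1 * S ^ 2) * S ^ b := by
        rw [← mul_assoc, ← mul_assoc, ← hleft]; simp only [mul_assoc]
    _ = S ^ a * S ^ 2 * S ^ b * T (1 + a) := by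
        rw [← hsq]; simp only [mul_assoc]; rw [hright]

end BraidRelations

theorem SN_central_general {A : Type*} [Ring A] (N : ℕ)
    (T : ℕ → A)
    (hbraid : ∀ i, 1 ≤ i → i + 1 ≤ N - 1 →
      T i * T (i + 1) * T i = T (i + 1) * T i * T (i + 1))
    (hcomm : ∀ i j, 1 ≤ i → j ≤ N - 1 → i + 1 < j → T i * T j = T j * T i)
    (j : ℕ) (h1 : 1 ≤ j) (hN : j ≤ N - 1) :
    T j * (((List.range (N - 1)).map (fun k => T (k + 1))).prod) ^ N
      = (((List.range (N - 1)).map (fun k => T (k + 1))).prod) ^ N * T j := by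
  have hcentral := commute_ascProd_one_pow hbraid hcomm h1 hN
  rwa [ascProd_one, Nat.sub_add_cancel (by omega)] at hcentral

/-- in the Hecke algebra `H_N(s)` with `S = T_1 ⋯ T_{N−1}`, the element
`S^N` is central: `T_j S^N = S^N T_j` for all `1 ≤ j ≤ N−1`. -/
theorem SN_central {K A : Type*} [Field K] [Ring A] [Algebra K A] (N : ℕ) (s : K)
    (T : ℕ → A)
    (hquad : ∀ i, 1 ≤ i → i ≤ N - 1 → (T i - algebraMap K A s) * (T i + 1) = 0)
    (hbraid : ∀ i, 1 ≤ i → i + 1 ≤ N - 1 →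
      T i * T (i + 1) * T i = T (i + 1) * T i * T (i + 1))
    (hcomm : ∀ i j, 1 ≤ i → j ≤ N - 1 → i + 1 < j → T i * T j = T j * T i)
    (j : ℕ) (h1 : 1 ≤ j) (hN : j ≤ N - 1) :
    T j * (((List.range (N - 1)).map (fun k => T (k + 1))).prod) ^ N
      = (((List.range (N - 1)).map (fun k => T (k + 1))).prod) ^ N * T j :=
  SN_central_general N T hbraid hcomm j h1 hN
end

section
/- In the Hecke algebra H_N(s), define φ_i' := T_i T_{i+1} ⋯ T_{N−1} T_{N−1} ⋯ T_{i+1} T_i for 1 ≤ i ≤ N−1 and S_i := T_i T_{i+1} ⋯ T_{N−1}. Then φ_i' φ_{i+1}' ⋯ φ_{N−1}' = S_i^{N+1−i}. In particular, with S = S_1, one has S^N = φ_1' φ_2' ⋯ φ_{N−1}'. -/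
/-- The ordered product `T_i T_{i+1} ⋯ T_{i+n-1}`. -/
def upProd {A : Type*} [Monoid A] (T : ℕ → A) (i n : ℕ) : A :=
  ((List.range n).map (fun k => T (i + k))).prod

/-- The ordered product `T_{i+n-1} ⋯ T_{i+1} T_i`. -/
def downProd {A : Type*} [Monoid A] (T : ℕ → A) (i n : ℕ) : A :=
  (((List.range n).map (fun k => T (i + k))).reverse).prod

section Aux

variable {A : Type*} [Monoid A]

lemma upProd_zero (T : ℕ → A) (i : ℕ) : upProd T i 0 = 1 := rfl

lemma downProd_zero (T : ℕ → A) (i : ℕ) : downProd T i 0 = 1 := rfl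

lemma upProd_succ_right (T : ℕ → A) (i n : ℕ) :
    upProd T i (n + 1) = upProd T i n * T (i + n) := by
  unfold upProd
  rw [List.range_succ, List.map_append, List.prod_append]
  simp

lemma downProd_succ_left (T : ℕ → A) (i n : ℕ) :
    downProd T i (n + 1) = T (i + n) * downProd T i n := by
  unfold downProd
  rw [List.range_succ, List.map_append, List.reverse_append]
  simp

lemma upProd_succ_left (T : ℕ → A) (i n : ℕ) :
    upProd T i (n + 1) = T i * upProd T (i + 1) n := by
  induction n with
  | zero => simp [upProd_succ_right, upProd_zero]
  | succ n ih =>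
      rw [upProd_succ_right, ih, upProd_succ_right, mul_assoc,
        show i + (n + 1) = i + 1 + n by omega]

lemma downProd_succ_right (T : ℕ → A) (i n : ℕ) :
    downProd T i (n + 1) = downProd T (i + 1) n * T i := by
  induction n with
  | zero => simp [downProd_succ_left, downProd_zero]
  | succ n ih =>
      rw [downProd_succ_left, ih, downProd_succ_left, ← mul_assoc]
      congr 3
      omega

end Aux

section Hecke

variable {A : Type*} [Ring A] (N : ℕ) (T : ℕ → A)

/-- A generator of low index commutes with an `upProd` of higher indices. -/
lemma commL
    (hcomm : ∀ i j, 1 ≤ i → j ≤ N - 1 → i + 1 < j → T i * T j = T j * T i) :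
    ∀ n i j, 1 ≤ j → j + 1 < i → i + n ≤ N →
      T j * upProd T i n = upProd T i n * T j := by
  intro n
  induction n with
  | zero => intro i j _ _ _; simp [upProd_zero]
  | succ n ih =>
      intro i j hj hji hiN
      rw [upProd_succ_left, ← mul_assoc, hcomm j i hj (by omega) hji,
        mul_assoc, ih (i + 1) j hj (by omega) (by omega), ← mul_assoc, mul_assoc]

/-- Shift lemma: `S_i T_j = T_{j+1} S_i` when `T_j, T_{j+1}` occur in `S_i`. -/
lemma shift
    (hbraid : ∀ i, 1 ≤ i → i + 1 ≤ N - 1 →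
      T i * T (i + 1) * T i = T (i + 1) * T i * T (i + 1))
    (hcomm : ∀ i j, 1 ≤ i → j ≤ N - 1 → i + 1 < j → T i * T j = T j * T i) :
    ∀ n i j, 1 ≤ i → i + n ≤ N → i ≤ j → j + 2 ≤ i + n →
      upProd T i n * T j = T (j + 1) * upProd T i n := by
  intro n
  induction n with
  | zero => intro i j _ _ h1 h2; omega
  | succ n ih =>
      intro i j hi hiN hij hjn
      rcases Nat.lt_or_ge i j with h | h
      · rw [upProd_succ_left, mul_assoc,
          ih (i + 1) j (by omega) (by omega) (by omega) (by omega),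
          ← mul_assoc, hcomm i (j + 1) hi (by omega) (by omega), mul_assoc]
      · have hji : j = i := by omega
        subst hji
        obtain ⟨m, rfl⟩ : ∃ m, n = m + 1 := ⟨n - 1, by omega⟩
        rw [upProd_succ_left, upProd_succ_left]
        have hc : T j * upProd T (j + 1 + 1) m = upProd T (j + 1 + 1) m * T j :=
          commL N T hcomm m (j + 1 + 1) j hi (by omega) (by omega)
        have hb := hbraid j hi (by omega)
        calc T j * (T (j + 1) * upProd T (j + 1 + 1) m) * T j
            = T j * T (j + 1) * (upProd T (j + 1 + 1) m * T j) := by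
              simp [mul_assoc]
          _ = T j * T (j + 1) * (T j * upProd T (j + 1 + 1) m) := by rw [← hc]
          _ = T j * T (j + 1) * T j * upProd T (j + 1 + 1) m := by
              simp [mul_assoc]
          _ = T (j + 1) * T j * T (j + 1) * upProd T (j + 1 + 1) m := by rw [hb]
          _ = T (j + 1) * (T j * (T (j + 1) * upProd T (j + 1 + 1) m)) := by
              simp [mul_assoc]

lemma shiftPow
    (hbraid : ∀ i, 1 ≤ i → i + 1 ≤ N - 1 →
      T i * T (i + 1) * T i = T (i + 1) * T i * T (i + 1))
    (hcomm : ∀ i j, 1 ≤ i → j ≤ N - 1 → i + 1 < j → T i * T j = T j * T i) :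
    ∀ m i n j, 1 ≤ i → i + n ≤ N → i ≤ j → j + m + 1 ≤ i + n →
      (upProd T i n) ^ m * T j = T (j + m) * (upProd T i n) ^ m := by
  intro m
  induction m with
  | zero => intro i n j _ _ _ _; simp
  | succ m ih =>
      intro i n j hi hiN hij hjm
      rw [pow_succ, mul_assoc,
        shift N T hbraid hcomm n i j hi hiN hij (by omega),
        ← mul_assoc, ih i n (j + 1) hi hiN (by omega) (by omega),
        mul_assoc, ← pow_succ]
      congr 2
      omega

lemma auxLem
    (hbraid : ∀ i, 1 ≤ i → i + 1 ≤ N - 1 →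
      T i * T (i + 1) * T i = T (i + 1) * T i * T (i + 1))
    (hcomm : ∀ i j, 1 ≤ i → j ≤ N - 1 → i + 1 < j → T i * T j = T j * T i)
    (i n : ℕ) (hi : 1 ≤ i) (hiN : i + n ≤ N) :
    ∀ k, k ≤ n →
      (upProd T i n) ^ n
        = downProd T (i + n - k) k *
            ((upProd T i n) ^ (n - k) * (upProd T (i + 1) (n - 1)) ^ k) := by
  intro k
  induction k with
  | zero => intro _; simp [downProd_zero]
  | succ k ihk =>
      intro hk
      have IH := ihk (by omega)
      have hS : upProd T i n = T i * upProd T (i + 1) (n - 1) := by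
        have h := upProd_succ_left T i (n - 1)
        rwa [show n - 1 + 1 = n by omega] at h
      have e1 : (upProd T i n) ^ (n - k)
          = T (i + n - (k + 1)) *
              ((upProd T i n) ^ (n - (k + 1)) * upProd T (i + 1) (n - 1)) := by
        have h2 : n - k = (n - (k + 1)) + 1 := by omega
        rw [h2, pow_succ]
        nth_rewrite 2 [hS]
        rw [← mul_assoc, ← mul_assoc,
          shiftPow N T hbraid hcomm (n - (k + 1)) i n i hi hiN le_rfl (by omega),
          show i + (n - (k + 1)) = i + n - (k + 1) by omega, mul_assoc]
      have hD : downProd T (i + n - (k + 1)) (k + 1)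
          = downProd T (i + n - k) k * T (i + n - (k + 1)) := by
        have h := downProd_succ_right T (i + n - (k + 1)) k
        rwa [show i + n - (k + 1) + 1 = i + n - k by omega] at h
      rw [IH, e1, hD, pow_succ' (upProd T (i + 1) (n - 1)) k]
      simp [mul_assoc]

lemma mainLem
    (hbraid : ∀ i, 1 ≤ i → i + 1 ≤ N - 1 →
      T i * T (i + 1) * T i = T (i + 1) * T i * T (i + 1))
    (hcomm : ∀ i j, 1 ≤ i → j ≤ N - 1 → i + 1 < j → T i * T j = T j * T i)
    (i n : ℕ) (hi : 1 ≤ i) (hiN : i + n ≤ N) :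
    (upProd T i n) ^ n = downProd T i n * (upProd T (i + 1) (n - 1)) ^ n := by
  have h := auxLem N T hbraid hcomm i n hi hiN n le_rfl
  simpa using h

lemma phiProd
    (hbraid : ∀ i, 1 ≤ i → i + 1 ≤ N - 1 →
      T i * T (i + 1) * T i = T (i + 1) * T i * T (i + 1))
    (hcomm : ∀ i j, 1 ≤ i → j ≤ N - 1 → i + 1 < j → T i * T j = T j * T i) :
    ∀ d i, 1 ≤ i → i + d = N →
      upProd (fun m => upProd T m (N - m) * downProd T m (N - m)) i d
        = (upProd T i d) ^ (d + 1) := by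
  intro d
  induction d with
  | zero => intro i _ _; simp [upProd_zero]
  | succ d ih =>
      intro i hi hiN
      have hNi : N - i = d + 1 := by omega
      rw [upProd_succ_left]
      rw [ih (i + 1) (by omega) (by omega), hNi]
      have hm := mainLem N T hbraid hcomm i (d + 1) hi (by omega)
      rw [show d + 1 - 1 = d by omega] at hm
      rw [pow_succ' (upProd T i (d + 1)) (d + 1), hm, mul_assoc]

end Hecke

/-- in the Hecke algebra `H_N(s)`, with
`φ'_i = T_i ⋯ T_{N−1} T_{N−1} ⋯ T_i` and `S_i = T_i ⋯ T_{N−1}`, one has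
`φ'_i φ'_{i+1} ⋯ φ'_{N−1} = S_i^{N+1−i}`; in particular (case `i = 1`, `S = S_1`),
`S^N = φ'_1 φ'_2 ⋯ φ'_{N−1}`. -/
theorem phi_prime_product {K A : Type*} [Field K] [Ring A] [Algebra K A] (N : ℕ) (s : K)
    (T : ℕ → A)
    (hquad : ∀ i, 1 ≤ i → i ≤ N - 1 → (T i - algebraMap K A s) * (T i + 1) = 0)
    (hbraid : ∀ i, 1 ≤ i → i + 1 ≤ N - 1 →
      T i * T (i + 1) * T i = T (i + 1) * T i * T (i + 1))
    (hcomm : ∀ i j, 1 ≤ i → j ≤ N - 1 → i + 1 < j → T i * T j = T j * T i) :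
    (∀ i, 1 ≤ i → i ≤ N - 1 →
      upProd (fun m => upProd T m (N - m) * downProd T m (N - m)) i (N - i)
        = (upProd T i (N - i)) ^ (N + 1 - i)) ∧
    (upProd T 1 (N - 1)) ^ N
      = upProd (fun m => upProd T m (N - m) * downProd T m (N - m)) 1 (N - 1) := by
  constructor
  · intro i h1 h2
    have hN : 2 ≤ N := by omega
    have h := phiProd N T hbraid hcomm (N - i) i h1 (by omega)
    rwa [show N + 1 - i = (N - i) + 1 by omega]
  · rcases Nat.lt_or_ge N 2 with h | h
    · have hN1 : N - 1 = 0 := by omega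
      rw [hN1]
      simp [upProd_zero]
    · have hp := phiProd N T hbraid hcomm (N - 1) 1 le_rfl (by omega)
      rw [hp]
      congr 1
      omega
end

section
/- Let v ∈ ℕ^N with rank function r_v. If v[i] = v[i+1] and k = r_v[i], then s_i ∘ r_v = r_v ∘ s_k (composing as permutations, with r_{v} viewed in S_N) and ℓ(s_i r_v) = ℓ(r_v) + 1. If v[i] > v[i+1] then r_{v·s_i} = s_i · r_v and v·s_i has exactly one more inversion than v; if v[i] < v[i+1] then v·s_i has exactly one fewer inversion than v. -/
/-- The rank function of a multi-index `v` (1-based values):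
`r_v[i] = #{j ≤ i : v[j] ≥ v[i]} + #{j > i : v[j] > v[i]}`. -/
def rankF {N : ℕ} (v : Fin N → ℕ) (i : Fin N) : ℕ :=
  (Finset.univ.filter (fun j : Fin N => j ≤ i ∧ v i ≤ v j)).card
    + (Finset.univ.filter (fun j : Fin N => i < j ∧ v i < v j)).card

/-- The number of inversions of an ℕ-valued word `w` on `Fin N`
(pairs `i < j` with `w i > w j`). -/
def invCount {N : ℕ} (w : Fin N → ℕ) : ℕ :=
  (Finset.univ.filter (fun p : Fin N × Fin N => p.1 < p.2 ∧ w p.2 < w p.1)).card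

/-- The number of inversions of a multi-index `v`
(pairs `i < j` with `v i < v j`). -/
def invV {N : ℕ} (v : Fin N → ℕ) : ℕ :=
  (Finset.univ.filter (fun p : Fin N × Fin N => p.1 < p.2 ∧ v p.1 < v p.2)).card

/-- `rankF` as the cardinality of a single set. -/
lemma rankF_eq_card {N : ℕ} (v : Fin N → ℕ) (i : Fin N) :
    rankF v i
      = (Finset.univ.filter (fun l : Fin N => v i < v l ∨ (v i = v l ∧ l ≤ i))).card := by
  unfold rankF
  rw [← Finset.card_union_of_disjoint]
  · congr 1
    ext l
    simp only [Finset.mem_union, Finset.mem_filter, Finset.mem_univ, true_and, Fin.lt_def,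
      Fin.le_def]
    omega
  · rw [Finset.disjoint_left]
    intro a ha hb
    simp only [Finset.mem_filter, Finset.mem_univ, true_and, Fin.lt_def, Fin.le_def] at ha hb
    omega

lemma rankF_lt_rankF {N : ℕ} (v : Fin N → ℕ) {p q : Fin N}
    (hpq : v q < v p ∨ (v p = v q ∧ p < q)) : rankF v p < rankF v q := by
  rw [rankF_eq_card, rankF_eq_card]
  apply Finset.card_lt_card
  constructor
  · intro l hl
    simp only [Finset.mem_filter, Finset.mem_univ, true_and, Fin.lt_def, Fin.le_def] at *
    omega
  · intro hsub
    have hq : q ∈ Finset.univ.filter (fun l : Fin N => v q < v l ∨ (v q = v l ∧ l ≤ q)) := by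
      simp
    have := hsub hq
    simp only [Finset.mem_filter, Finset.mem_univ, true_and, Fin.lt_def, Fin.le_def] at this hpq
    omega

lemma rankF_injective {N : ℕ} (v : Fin N → ℕ) : Function.Injective (rankF v) := by
  intro p q hpq
  by_contra hne
  have hv : p.val ≠ q.val := fun hh => hne (Fin.ext hh)
  rcases lt_trichotomy (v p) (v q) with h | h | h
  · exact absurd hpq (Nat.ne_of_gt (rankF_lt_rankF v (Or.inl h)))
  · rcases lt_or_gt_of_ne hv with h' | h'
    · exact absurd hpq (Nat.ne_of_lt (rankF_lt_rankF v (Or.inr ⟨h, h'⟩)))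
    · exact absurd hpq (Nat.ne_of_gt (rankF_lt_rankF v (Or.inr ⟨h.symm, h'⟩)))
  · exact absurd hpq (Nat.ne_of_lt (rankF_lt_rankF v (Or.inl h)))

lemma rankF_succ {N : ℕ} (v : Fin N → ℕ) (i0 i1 : Fin N) (hi : (i0 : ℕ) + 1 = (i1 : ℕ))
    (hv : v i0 = v i1) : rankF v i1 = rankF v i0 + 1 := by
  rw [rankF_eq_card, rankF_eq_card]
  have key : (Finset.univ.filter (fun l : Fin N => v i1 < v l ∨ (v i1 = v l ∧ l ≤ i1)))
      = insert i1 (Finset.univ.filter (fun l : Fin N => v i0 < v l ∨ (v i0 = v l ∧ l ≤ i0))) := by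
    ext l
    by_cases hl : l = i1
    · subst hl
      simp
    · have hl' : l.val ≠ i1.val := fun hh => hl (Fin.ext hh)
      simp only [Finset.mem_insert, Finset.mem_filter, Finset.mem_univ, true_and, Fin.le_def,
        Fin.ext_iff, hv]
      omega
  rw [key, Finset.card_insert_of_notMem]
  simp only [Finset.mem_filter, Finset.mem_univ, true_and, Fin.le_def, hv]
  omega

lemma swap_val_eq {N : ℕ} {i0 i1 : Fin N} (hi : (i0 : ℕ) + 1 = (i1 : ℕ)) (x : Fin N) :
    ((Equiv.swap i0 i1 x : Fin N) : ℕ)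
      = if (x : ℕ) = (i0 : ℕ) then (i1 : ℕ) else if (x : ℕ) = (i1 : ℕ) then (i0 : ℕ)
        else (x : ℕ) := by
  rcases eq_or_ne x i0 with h | h
  · subst h
    simp [Equiv.swap_apply_left]
  · rcases eq_or_ne x i1 with h' | h'
    · subst h'
      have h0 : (x : ℕ) ≠ (i0 : ℕ) := fun hh => h (Fin.ext hh)
      rw [Equiv.swap_apply_right, if_neg h0, if_pos rfl]
    · have h0 : (x : ℕ) ≠ (i0 : ℕ) := fun hh => h (Fin.ext hh)
      have h1 : (x : ℕ) ≠ (i1 : ℕ) := fun hh => h' (Fin.ext hh)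
      rw [Equiv.swap_apply_of_ne_of_ne h h', if_neg h0, if_neg h1]

lemma swap_lt_swap {N : ℕ} {i0 i1 p q : Fin N} (hi : (i0 : ℕ) + 1 = (i1 : ℕ))
    (hpq : p < q) (hne : ¬(p = i0 ∧ q = i1)) :
    Equiv.swap i0 i1 p < Equiv.swap i0 i1 q := by
  simp only [Fin.ext_iff, not_and] at hne
  rw [Fin.lt_def] at hpq ⊢
  rw [swap_val_eq hi, swap_val_eq hi]
  split_ifs <;> omega

/-- Generic behaviour of pair counts under an adjacent transposition. -/
lemma count_swap {N : ℕ} (i0 i1 : Fin N) (hi : (i0 : ℕ) + 1 = (i1 : ℕ))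
    (w : Fin N → ℕ) (r : ℕ → ℕ → Prop) [DecidableRel r]
    (h1 : r (w i1) (w i0)) (h2 : ¬ r (w i0) (w i1)) :
    (Finset.univ.filter (fun p : Fin N × Fin N =>
        p.1 < p.2 ∧ r (w (Equiv.swap i0 i1 p.1)) (w (Equiv.swap i0 i1 p.2)))).card
      = (Finset.univ.filter (fun p : Fin N × Fin N => p.1 < p.2 ∧ r (w p.1) (w p.2))).card
        + 1 := by
  set σ := Equiv.swap i0 i1 with hσ
  have hσσ : ∀ x, σ (σ x) = x := fun x => Equiv.swap_apply_self i0 i1 x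
  have h01 : i0 < i1 := by simp only [Fin.lt_def]; omega
  have key : (Finset.univ.filter (fun p : Fin N × Fin N =>
        p.1 < p.2 ∧ r (w (σ p.1)) (w (σ p.2))))
      = insert (i0, i1) ((Finset.univ.filter
          (fun p : Fin N × Fin N => p.1 < p.2 ∧ r (w p.1) (w p.2))).image
            (Prod.map σ σ)) := by
    ext ⟨p, q⟩
    simp only [Finset.mem_insert, Finset.mem_image, Finset.mem_filter, Finset.mem_univ,
      true_and, Prod.mk.injEq, Prod.exists, Prod.map_apply]
    constructor
    · rintro ⟨hpq, hr⟩
      by_cases hcase : p = i0 ∧ q = i1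
      · exact Or.inl ⟨hcase.1, hcase.2⟩
      · refine Or.inr ⟨σ p, σ q, ⟨swap_lt_swap hi hpq hcase, ?_⟩, hσσ p, hσσ q⟩
        exact hr
    · rintro (⟨rfl, rfl⟩ | ⟨a, b, ⟨hab, hr⟩, rfl, rfl⟩)
      · refine ⟨h01, ?_⟩
        rw [hσ, Equiv.swap_apply_left, Equiv.swap_apply_right]
        exact h1
      · have hne : ¬(a = i0 ∧ b = i1) := by
          rintro ⟨rfl, rfl⟩
          exact h2 hr
        exact ⟨swap_lt_swap hi hab hne, by rwa [hσσ, hσσ]⟩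
  rw [key, Finset.card_insert_of_notMem, Finset.card_image_of_injective _
    (Function.Injective.prodMap σ.injective σ.injective), Nat.add_comm]
  · intro hmem
    simp only [Finset.mem_image, Finset.mem_filter, Finset.mem_univ, true_and, Prod.exists,
      Prod.map_apply, Prod.mk.injEq] at hmem
    obtain ⟨a, b, ⟨hab, -⟩, ha, hb⟩ := hmem
    have ha' : a = σ i0 := by rw [← ha, hσσ]
    have hb' : b = σ i1 := by rw [← hb, hσσ]
    rw [hσ, Equiv.swap_apply_left] at ha'
    rw [hσ, Equiv.swap_apply_right] at hb'
    subst ha' hb'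
    simp only [Fin.lt_def] at hab
    omega

lemma invV_swap {N : ℕ} (v : Fin N → ℕ) (i0 i1 : Fin N) (hi : (i0 : ℕ) + 1 = (i1 : ℕ))
    (hv : v i1 < v i0) : invV (v ∘ Equiv.swap i0 i1) = invV v + 1 := by
  unfold invV
  exact count_swap i0 i1 hi v (· < ·) hv (by omega)

lemma rank_comp_swap {N : ℕ} (v : Fin N → ℕ) (i0 i1 : Fin N)
    (hi : (i0 : ℕ) + 1 = (i1 : ℕ)) (hv : v i1 < v i0) (j : Fin N) :
    rankF (v ∘ Equiv.swap i0 i1) j = rankF v (Equiv.swap i0 i1 j) := by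
  set σ := Equiv.swap i0 i1 with hσ
  rw [rankF_eq_card, rankF_eq_card]
  have step1 : (Finset.univ.filter (fun l : Fin N =>
      (v ∘ σ) j < (v ∘ σ) l ∨ ((v ∘ σ) j = (v ∘ σ) l ∧ l ≤ j))).card
      = (Finset.univ.filter (fun l : Fin N =>
        v (σ j) < v l ∨ (v (σ j) = v l ∧ σ l ≤ j))).card := by
    apply Finset.card_bij' (fun l _ => σ l) (fun l _ => σ l) <;>
      simp [Function.comp, Equiv.swap_apply_self, hσ]
  rw [step1]
  refine congrArg Finset.card (Finset.filter_congr ?_)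
  intro l _
  rcases eq_or_ne j i0 with hj | hj0
  · rw [hj, hσ, Equiv.swap_apply_left]
    rcases eq_or_ne l i0 with hl | hl0
    · rw [hl, Equiv.swap_apply_left]
      first
      | (simp only [Fin.le_def]; omega)
      | simp [Fin.le_def]
      | (simp [Fin.le_def]; omega)
    · rcases eq_or_ne l i1 with hl | hl1
      · rw [hl, Equiv.swap_apply_right]
        first
        | (simp only [Fin.le_def]; omega)
        | simp [Fin.le_def]
        | (simp [Fin.le_def]; omega)
      · rw [Equiv.swap_apply_of_ne_of_ne hl0 hl1]
        have h0 : (l : ℕ) ≠ (i0 : ℕ) := fun hh => hl0 (Fin.ext hh)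
        have h1 : (l : ℕ) ≠ (i1 : ℕ) := fun hh => hl1 (Fin.ext hh)
        first
        | (simp only [Fin.le_def]; omega)
        | simp [Fin.le_def]
        | (simp [Fin.le_def]; omega)
  · rcases eq_or_ne j i1 with hj | hj1
    · rw [hj, hσ, Equiv.swap_apply_right]
      rcases eq_or_ne l i0 with hl | hl0
      · rw [hl, Equiv.swap_apply_left]
        first
        | (simp only [Fin.le_def]; omega)
        | simp [Fin.le_def]
        | (simp [Fin.le_def]; omega)
      · rcases eq_or_ne l i1 with hl | hl1
        · rw [hl, Equiv.swap_apply_right]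
          first
          | (simp only [Fin.le_def]; omega)
          | simp [Fin.le_def]
          | (simp [Fin.le_def]; omega)
        · rw [Equiv.swap_apply_of_ne_of_ne hl0 hl1]
          have h0 : (l : ℕ) ≠ (i0 : ℕ) := fun hh => hl0 (Fin.ext hh)
          have h1 : (l : ℕ) ≠ (i1 : ℕ) := fun hh => hl1 (Fin.ext hh)
          first
          | (simp only [Fin.le_def]; omega)
          | simp [Fin.le_def]
          | (simp [Fin.le_def]; omega)
    · rw [hσ, Equiv.swap_apply_of_ne_of_ne hj0 hj1]
      have g0 : (j : ℕ) ≠ (i0 : ℕ) := fun hh => hj0 (Fin.ext hh)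
      have g1 : (j : ℕ) ≠ (i1 : ℕ) := fun hh => hj1 (Fin.ext hh)
      rcases eq_or_ne l i0 with hl | hl0
      · rw [hl, Equiv.swap_apply_left]
        first
        | (simp only [Fin.le_def]; omega)
        | simp [Fin.le_def]
        | (simp [Fin.le_def]; omega)
      · rcases eq_or_ne l i1 with hl | hl1
        · rw [hl, Equiv.swap_apply_right]
          first
          | (simp only [Fin.le_def]; omega)
          | simp [Fin.le_def]
          | (simp [Fin.le_def]; omega)
        · rw [Equiv.swap_apply_of_ne_of_ne hl0 hl1]

lemma part1_rank {N : ℕ} (v : Fin N → ℕ) (i0 i1 : Fin N) (hi : (i0 : ℕ) + 1 = (i1 : ℕ))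
    (hv : v i0 = v i1) (j : Fin N) :
    rankF v (Equiv.swap i0 i1 j)
      = Equiv.swap (rankF v i0) (rankF v i0 + 1) (rankF v j) := by
  have hk1 : rankF v i1 = rankF v i0 + 1 := rankF_succ v i0 i1 hi hv
  rcases eq_or_ne j i0 with hj | hj0
  · rw [hj, Equiv.swap_apply_left, hk1, Equiv.swap_apply_left]
  · rcases eq_or_ne j i1 with hj | hj1
    · rw [hj, Equiv.swap_apply_right, hk1, Equiv.swap_apply_right]
    · have hr0 : rankF v j ≠ rankF v i0 := fun hh => hj0 (rankF_injective v hh)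
      have hr1 : rankF v j ≠ rankF v i0 + 1 := by
        rw [← hk1]; exact fun hh => hj1 (rankF_injective v hh)
      rw [Equiv.swap_apply_of_ne_of_ne hj0 hj1, Equiv.swap_apply_of_ne_of_ne hr0 hr1]

lemma part1_inv {N : ℕ} (v : Fin N → ℕ) (i0 i1 : Fin N) (hi : (i0 : ℕ) + 1 = (i1 : ℕ))
    (hv : v i0 = v i1) :
    invCount (fun j => rankF v (Equiv.swap i0 i1 j)) = invCount (rankF v) + 1 := by
  have hk1 : rankF v i1 = rankF v i0 + 1 := rankF_succ v i0 i1 hi hv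
  unfold invCount
  exact count_swap i0 i1 hi (rankF v) (fun a b => b < a) (by omega) (by omega)


/-- behaviour of the rank function under an adjacent transposition
`s_i` (swapping positions `i` and `i+1`; `v·s_i = v ∘ s_i`).
(1) If `v[i] = v[i+1]` and `k = r_v[i]`, then `s_i r_v = r_v s_k` (i.e. the word
`j ↦ r_v[s_i j]` is obtained from `r_v` by exchanging the values `k` and `k+1`) and
`ℓ(s_i r_v) = ℓ(r_v) + 1`.
(2) If `v[i] > v[i+1]` then `r_{v·s_i} = s_i r_v` and `#inv(v·s_i) = #inv(v) + 1`.
(3) If `v[i] < v[i+1]` then `#inv(v·s_i) = #inv(v) − 1`. -/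
theorem rank_function_transposition {N : ℕ} (v : Fin N → ℕ)
    (i : ℕ) (h : i + 1 < N) :
    (v ⟨i, by omega⟩ = v ⟨i + 1, h⟩ →
      (∀ j : Fin N,
        rankF v (Equiv.swap (⟨i, by omega⟩ : Fin N) ⟨i + 1, h⟩ j)
          = Equiv.swap (rankF v ⟨i, by omega⟩) (rankF v ⟨i, by omega⟩ + 1)
              (rankF v j)) ∧
      invCount (fun j => rankF v (Equiv.swap (⟨i, by omega⟩ : Fin N) ⟨i + 1, h⟩ j))
        = invCount (rankF v) + 1) ∧
    (v ⟨i + 1, h⟩ < v ⟨i, by omega⟩ →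
      (∀ j : Fin N,
        rankF (v ∘ Equiv.swap (⟨i, by omega⟩ : Fin N) ⟨i + 1, h⟩) j
          = rankF v (Equiv.swap (⟨i, by omega⟩ : Fin N) ⟨i + 1, h⟩ j)) ∧
      invV (v ∘ Equiv.swap (⟨i, by omega⟩ : Fin N) ⟨i + 1, h⟩) = invV v + 1) ∧
    (v ⟨i, by omega⟩ < v ⟨i + 1, h⟩ →
      invV (v ∘ Equiv.swap (⟨i, by omega⟩ : Fin N) ⟨i + 1, h⟩) + 1 = invV v) := by
  have hi0 : i < N := by omega
  refine ⟨fun hv => ⟨part1_rank v ⟨i, hi0⟩ ⟨i + 1, h⟩ rfl hv,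
      part1_inv v ⟨i, hi0⟩ ⟨i + 1, h⟩ rfl hv⟩,
    fun hv => ⟨rank_comp_swap v ⟨i, hi0⟩ ⟨i + 1, h⟩ rfl hv,
      invV_swap v ⟨i, hi0⟩ ⟨i + 1, h⟩ rfl hv⟩,
    fun hv => ?_⟩
  have hcomp : (v ∘ Equiv.swap (⟨i, hi0⟩ : Fin N) ⟨i + 1, h⟩) ∘
      Equiv.swap (⟨i, hi0⟩ : Fin N) ⟨i + 1, h⟩ = v := by
    funext x
    simp [Function.comp, Equiv.swap_apply_self]
  have hv' : (v ∘ Equiv.swap (⟨i, hi0⟩ : Fin N) ⟨i + 1, h⟩) ⟨i + 1, h⟩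
      < (v ∘ Equiv.swap (⟨i, hi0⟩ : Fin N) ⟨i + 1, h⟩) ⟨i, hi0⟩ := by
    simp only [Function.comp_apply, Equiv.swap_apply_left, Equiv.swap_apply_right]
    exact hv
  have := invV_swap (v ∘ Equiv.swap (⟨i, hi0⟩ : Fin N) ⟨i + 1, h⟩) ⟨i, hi0⟩ ⟨i + 1, h⟩ rfl hv'
  rw [hcomp] at this
  omega
end
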